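/- arXiv:2303.08412 — 4 statements merged into one kernel-verified Lean document; each statement's English description precedes it below -/
import Mathlib

section
/- Suppose each f_i : ℝ^d → ℝ (i = 1,…,n) is L-smooth, i.e. ‖∇f_i(x) − ∇f_i(y)‖ ≤ L‖x−y‖ for all x, y. Let x_1, …, x_n ∈ ℝ^d, x̄ = (1/n)Σ_k x_k, let x_* ∈ ℝ^d, and set D = max_i ‖∇f_i(x_*)‖. Then Σ_{i=1}^n ‖∇f_i(x_i) − (1/n) Σ_{l=1}^n ∇f_l(x_l)‖² ≤ 3L² Σ_{i=1}^n ‖x_i − x̄‖² + 3nL² ‖x̄ − x_*‖² + 3nD². -/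
/-!
Centring at the mean can only decrease the sum of squared norms, so it suffices to bound
`∑ ‖∇fᵢ(xᵢ)‖²`. Each term is split along `xᵢ → x̄ → x⋆`: two Lipschitz increments and the
gradient at `x⋆`, and `(a + b + c)² ≤ 3 (a² + b² + c²)` turns the triangle inequality into the
three-term bound.
-/

open Finset

section Mean

variable {ι E : Type*} [NormedAddCommGroup E] [InnerProductSpace ℝ E]

theorem sum_norm_sub_sq_eq (s : Finset ι) (a : ι → E) (m : E) :
    ∑ i ∈ s, ‖a i - m‖ ^ 2
      = ∑ i ∈ s, ‖a i‖ ^ 2 - 2 * inner ℝ (∑ i ∈ s, a i) m + #s * ‖m‖ ^ 2 := by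
  simp only [norm_sub_sq_real, sum_add_distrib, sum_sub_distrib, ← mul_sum, sum_inner,
    sum_const, nsmul_eq_mul]

theorem sum_norm_sub_mean_sq_le (s : Finset ι) (a : ι → E) :
    ∑ i ∈ s, ‖a i - (#s : ℝ)⁻¹ • ∑ j ∈ s, a j‖ ^ 2 ≤ ∑ i ∈ s, ‖a i‖ ^ 2 := by
  rcases s.eq_empty_or_nonempty with rfl | hs
  · simp
  set m : E := (#s : ℝ)⁻¹ • ∑ j ∈ s, a j
  have hcard : (#s : ℝ) ≠ 0 := by exact_mod_cast hs.card_pos.ne'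
  have hsum : ∑ j ∈ s, a j = (#s : ℝ) • m := by simp only [m, smul_inv_smul₀ hcard]
  have hcross : inner ℝ (∑ j ∈ s, a j) m = #s * ‖m‖ ^ 2 := by
    rw [hsum, real_inner_smul_left, real_inner_self_eq_norm_sq]
  rw [sum_norm_sub_sq_eq, hcross]
  nlinarith [sq_nonneg ‖m‖, (Nat.cast_nonneg #s : (0 : ℝ) ≤ #s)]

end Mean

theorem add_three_sq_le (a b c : ℝ) : (a + b + c) ^ 2 ≤ 3 * (a ^ 2 + b ^ 2 + c ^ 2) := by
  nlinarith [sq_nonneg (a - b), sq_nonneg (a - c), sq_nonneg (b - c)]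

theorem norm_sq_le_three_mul_sq_add {E F : Type*} [SeminormedAddCommGroup E]
    [SeminormedAddCommGroup F] {g : E → F} {L : ℝ} (hg : ∀ x y, ‖g x - g y‖ ≤ L * ‖x - y‖)
    (x y z : E) :
    ‖g x‖ ^ 2 ≤ 3 * L ^ 2 * ‖x - y‖ ^ 2 + 3 * L ^ 2 * ‖y - z‖ ^ 2 + 3 * ‖g z‖ ^ 2 := by
  have hsq : ∀ u v, ‖g u - g v‖ ^ 2 ≤ L ^ 2 * ‖u - v‖ ^ 2 := fun u v => by
    rw [← mul_pow]; exact pow_le_pow_left₀ (norm_nonneg _) (hg u v) 2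
  have htri : ‖g x‖ ≤ ‖g x - g y‖ + ‖g y - g z‖ + ‖g z‖ := by
    simpa only [sub_add_sub_cancel, sub_add_cancel] using
      norm_add₃_le (a := g x - g y) (b := g y - g z) (c := g z)
  calc ‖g x‖ ^ 2 ≤ (‖g x - g y‖ + ‖g y - g z‖ + ‖g z‖) ^ 2 :=
        pow_le_pow_left₀ (norm_nonneg _) htri 2
    _ ≤ 3 * (‖g x - g y‖ ^ 2 + ‖g y - g z‖ ^ 2 + ‖g z‖ ^ 2) := add_three_sq_le _ _ _
    _ ≤ _ := by linarith [hsq x y, hsq y z]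

theorem grad_deviation_bound_general {d n : ℕ}
    (g : Fin n → EuclideanSpace ℝ (Fin d) → EuclideanSpace ℝ (Fin d))
    (L : ℝ)
    (hsmooth : ∀ i x y, ‖g i x - g i y‖ ≤ L * ‖x - y‖)
    (x : Fin n → EuclideanSpace ℝ (Fin d)) (xstar : EuclideanSpace ℝ (Fin d))
    (D : ℝ) (hD : ∀ i, ‖g i xstar‖ ≤ D) :
    ∑ i, ‖g i (x i) - (n : ℝ)⁻¹ • ∑ l, g l (x l)‖ ^ 2
      ≤ 3 * L ^ 2 * ∑ i, ‖x i - (n : ℝ)⁻¹ • ∑ k, x k‖ ^ 2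
        + 3 * n * L ^ 2 * ‖(n : ℝ)⁻¹ • (∑ k, x k) - xstar‖ ^ 2
        + 3 * n * D ^ 2 := by
  set xbar := (n : ℝ)⁻¹ • ∑ k, x k
  have hterm : ∀ i, ‖g i (x i)‖ ^ 2
      ≤ 3 * L ^ 2 * ‖x i - xbar‖ ^ 2 + 3 * L ^ 2 * ‖xbar - xstar‖ ^ 2 + 3 * D ^ 2 := fun i => by
    have hDsq := pow_le_pow_left₀ (norm_nonneg _) (hD i) 2
    linarith [norm_sq_le_three_mul_sq_add (hsmooth i) (x i) xbar xstar]
  calc ∑ i, ‖g i (x i) - (n : ℝ)⁻¹ • ∑ l, g l (x l)‖ ^ 2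
      ≤ ∑ i, ‖g i (x i)‖ ^ 2 := by
        simpa only [card_univ, Fintype.card_fin] using
          sum_norm_sub_mean_sq_le univ fun i => g i (x i)
    _ ≤ ∑ i, (3 * L ^ 2 * ‖x i - xbar‖ ^ 2 + 3 * L ^ 2 * ‖xbar - xstar‖ ^ 2 + 3 * D ^ 2) :=
        sum_le_sum fun i _ => hterm i
    _ = _ := by
        simp only [sum_add_distrib, ← mul_sum, sum_const, card_univ, Fintype.card_fin,
          nsmul_eq_mul]
        ring

/-- Bound on the deviation of local gradients from their mean for `L`-smooth costs. -/
theorem grad_deviation_bound {d n : ℕ} (f : Fin n → EuclideanSpace ℝ (Fin d) → ℝ)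
    (g : Fin n → EuclideanSpace ℝ (Fin d) → EuclideanSpace ℝ (Fin d))
    (L : ℝ) (hL : 0 ≤ L)
    (hsmooth : ∀ i x y, ‖g i x - g i y‖ ≤ L * ‖x - y‖)
    (x : Fin n → EuclideanSpace ℝ (Fin d)) (xstar : EuclideanSpace ℝ (Fin d))
    (D : ℝ) (hD : ∀ i, ‖g i xstar‖ ≤ D) :
    ∑ i, ‖g i (x i) - (n : ℝ)⁻¹ • ∑ l, g l (x l)‖ ^ 2
      ≤ 3 * L ^ 2 * ∑ i, ‖x i - (n : ℝ)⁻¹ • ∑ k, x k‖ ^ 2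
        + 3 * n * L ^ 2 * ‖(n : ℝ)⁻¹ • (∑ k, x k) - xstar‖ ^ 2
        + 3 * n * D ^ 2 :=
  grad_deviation_bound_general g L hsmooth x xstar D hD
end

section
/- Let 0 < β < 1, G > 0, μ > 0, α > 0 with μα/2 < 1, and let q : ℕ → ℝ satisfy q(0) = 0 and q(t+1) = (1 − μα/2) q(t) + G β^t for all t. Then for all t ≥ 1, q(t) ≤ (2G/(μα)) ((1 − μα/2)^{t−1} + β^{(t−1)/2}). -/
/-!
Unrolling the recurrence gives `q (n + 1) = G * ∑_{i + j = n} c ^ i * β ^ j` with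
`c = 1 - μα/2`. Put `y = max c √β`. Pairing the term `(i, j)` with `(j, i)` and using
`(1 - y ^ k) (y ^ k - c ^ k) ≥ 0` for `k = j - i` bounds each pair by `y ^ n (c ^ i + c ^ j)`,
so the sum is at most `y ^ n ∑_{i ≤ n} c ^ i ≤ y ^ n / (1 - c)`,
and `y ^ n ≤ c ^ n + √β ^ n`.
-/

open Finset

theorem eq_sum_antidiagonal_of_eq_mul_add {R : Type*} [Semiring R] {q f : ℕ → R} {c : R}
    (hq0 : q 0 = 0) (hrec : ∀ t, q (t + 1) = c * q t + f t) (n : ℕ) :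
    q (n + 1) = ∑ p ∈ antidiagonal n, c ^ p.1 * f p.2 := by
  induction n with
  | zero => simp [hrec 0, hq0]
  | succ n ih =>
    rw [hrec, ih, Nat.sum_antidiagonal_succ, mul_sum]
    simp only [pow_succ', mul_assoc, pow_zero, one_mul]
    exact add_comm _ _

theorem pow_mul_pow_add_pow_mul_pow_le {c y β : ℝ} (hc : 0 ≤ c) (hcy : c ≤ y) (hy : y ≤ 1)
    (hβ : 0 ≤ β) (hβy : β ≤ y ^ 2) (i j : ℕ) :
    c ^ i * β ^ j + c ^ j * β ^ i ≤ y ^ (i + j) * (c ^ i + c ^ j) := by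
  wlog hij : i ≤ j generalizing i j
  · simpa only [add_comm] using this j i (by omega)
  obtain ⟨k, rfl⟩ := Nat.exists_eq_add_of_le hij
  have hy0 : 0 ≤ y := hc.trans hcy
  have hkey : 0 ≤ (1 - y ^ k) * (y ^ k - c ^ k) :=
    mul_nonneg (sub_nonneg.2 (pow_le_one₀ hy0 hy)) (sub_nonneg.2 (pow_le_pow_left₀ hc hcy k))
  calc c ^ i * β ^ (i + k) + c ^ (i + k) * β ^ i
      ≤ c ^ i * (y ^ 2) ^ (i + k) + c ^ (i + k) * (y ^ 2) ^ i := by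
        gcongr
    _ = y ^ (i + (i + k)) * (c ^ i + c ^ (i + k))
          - (y ^ i) ^ 2 * c ^ i * ((1 - y ^ k) * (y ^ k - c ^ k)) := by
        ring
    _ ≤ y ^ (i + (i + k)) * (c ^ i + c ^ (i + k)) :=
        sub_le_self _ (by positivity)

theorem sum_antidiagonal_pow_mul_pow_le {c y β : ℝ} (hc : 0 ≤ c) (hcy : c ≤ y) (hy : y ≤ 1)
    (hβ : 0 ≤ β) (hβy : β ≤ y ^ 2) (n : ℕ) :
    ∑ p ∈ antidiagonal n, c ^ p.1 * β ^ p.2 ≤ y ^ n * ∑ i ∈ range (n + 1), c ^ i := by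
  have hswapβ :
      ∑ p ∈ antidiagonal n, c ^ p.2 * β ^ p.1 = ∑ p ∈ antidiagonal n, c ^ p.1 * β ^ p.2 :=
    Nat.sum_antidiagonal_swap (f := fun p => c ^ p.1 * β ^ p.2)
  have hswap : ∑ p ∈ antidiagonal n, c ^ p.2 = ∑ p ∈ antidiagonal n, c ^ p.1 :=
    Nat.sum_antidiagonal_swap (f := fun p => c ^ p.1)
  have hrange : ∑ p ∈ antidiagonal n, c ^ p.1 = ∑ i ∈ range (n + 1), c ^ i :=
    Nat.sum_antidiagonal_eq_sum_range_succ_mk (fun p => c ^ p.1) n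
  have hpairs : 2 * ∑ p ∈ antidiagonal n, c ^ p.1 * β ^ p.2
      ≤ 2 * (y ^ n * ∑ p ∈ antidiagonal n, c ^ p.1) := by
    calc 2 * ∑ p ∈ antidiagonal n, c ^ p.1 * β ^ p.2
        = ∑ p ∈ antidiagonal n, (c ^ p.1 * β ^ p.2 + c ^ p.2 * β ^ p.1) := by
          rw [sum_add_distrib, hswapβ]; ring
      _ ≤ ∑ p ∈ antidiagonal n, y ^ n * (c ^ p.1 + c ^ p.2) := by
          refine sum_le_sum fun p hp => ?_
          rw [← mem_antidiagonal.1 hp]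
          exact pow_mul_pow_add_pow_mul_pow_le hc hcy hy hβ hβy p.1 p.2
      _ = 2 * (y ^ n * ∑ p ∈ antidiagonal n, c ^ p.1) := by
          rw [← mul_sum, sum_add_distrib, hswap]; ring
  rw [← hrange]
  linarith

theorem one_sub_mul_sum_antidiagonal_pow_mul_pow_le {c β : ℝ} (hc0 : 0 ≤ c) (hc1 : c ≤ 1)
    (hβ0 : 0 ≤ β) (hβ1 : β ≤ 1) (n : ℕ) :
    (1 - c) * ∑ p ∈ antidiagonal n, c ^ p.1 * β ^ p.2 ≤ c ^ n + √β ^ n := by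
  set y := max c √β
  have hy1 : y ≤ 1 := max_le hc1 (Real.sqrt_le_one.2 hβ1)
  have hβy : β ≤ y ^ 2 := by
    calc β = √β ^ 2 := (Real.sq_sqrt hβ0).symm
      _ ≤ y ^ 2 := pow_le_pow_left₀ (Real.sqrt_nonneg β) (le_max_right _ _) 2
  have hyn : y ^ n ≤ c ^ n + √β ^ n := by
    have := pow_nonneg hc0 n
    have := pow_nonneg (Real.sqrt_nonneg β) n
    rcases max_choice c √β with h | h <;> rw [show y = _ from h] <;> linarith
  have hsum := sum_antidiagonal_pow_mul_pow_le hc0 (le_max_left c √β) hy1 hβ0 hβy n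
  calc (1 - c) * ∑ p ∈ antidiagonal n, c ^ p.1 * β ^ p.2
      ≤ (1 - c) * (y ^ n * ∑ i ∈ range (n + 1), c ^ i) :=
        mul_le_mul_of_nonneg_left hsum (sub_nonneg.2 hc1)
    _ = y ^ n * (1 - c ^ (n + 1)) := by rw [← mul_neg_geom_sum]; ring
    _ ≤ y ^ n := mul_le_of_le_one_right (by positivity) (by linarith [pow_nonneg hc0 (n + 1)])
    _ ≤ c ^ n + √β ^ n := hyn

/-- Bound for the auxiliary sequence `q(t+1) = (1 − μα/2) q(t) + G β^t`, `q(0) = 0`. -/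
theorem aux_seq_bound (β G μ α : ℝ) (hβ0 : 0 < β) (hβ1 : β < 1)
    (hG : 0 < G) (hμ : 0 < μ) (hα : 0 < α) (hμα : μ * α / 2 < 1)
    (q : ℕ → ℝ) (hq0 : q 0 = 0)
    (hrec : ∀ t : ℕ, q (t + 1) = (1 - μ * α / 2) * q t + G * β ^ t) :
    ∀ t : ℕ, 1 ≤ t →
      q t ≤ 2 * G / (μ * α) * ((1 - μ * α / 2) ^ (t - 1) + β ^ (((t : ℝ) - 1) / 2)) := by
  intro t ht
  obtain ⟨n, rfl⟩ := Nat.exists_eq_add_of_le' ht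
  set c := 1 - μ * α / 2 with hc
  have hμα0 : 0 < μ * α := mul_pos hμ hα
  have hrpow : β ^ ((((n + 1 : ℕ) : ℝ) - 1) / 2) = √β ^ n := by
    rw [Real.sqrt_eq_rpow, ← Real.rpow_natCast, ← Real.rpow_mul hβ0.le]
    push_cast
    ring_nf
  have hq : q (n + 1) = G * ∑ p ∈ antidiagonal n, c ^ p.1 * β ^ p.2 := by
    rw [eq_sum_antidiagonal_of_eq_mul_add hq0 hrec, mul_sum]
    exact sum_congr rfl fun p _ => by ring
  have hbound := one_sub_mul_sum_antidiagonal_pow_mul_pow_le (c := c) (by linarith) (by linarith)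
    hβ0.le hβ1.le n
  have hconst : 2 * G / (μ * α) = G / (1 - c) := by rw [hc]; field_simp; ring
  rw [Nat.add_sub_cancel, hrpow, hq, hconst, div_mul_eq_mul_div, le_div_iff₀ (by linarith)]
  linarith [mul_le_mul_of_nonneg_left hbound hG.le]
end

section
/- Let 0 < α < 1/45 and consider the map on ℝ² given by x₁' = max((2/3 − 10α)x₁ + (1/3)x₂, 1), x₂' = max((1/3)x₁ + (2/3 + 6α)x₂, 1). Suppose x₁(t₀+1) = 1 and 1 ≤ x₂(t₀+1) ≤ 1 + 30α. Then for all t ≥ t₀ + 1, the iterates satisfy x₁(t) = 1 and 1 ≤ x₂(t) ≤ 1 + 30α, and x₂(t) → 1/(1 − 18α) as t → ∞; moreover x₂(t+1) − 1/(1−18α) = ((2+18α)/3)(x₂(t) − 1/(1−18α)) whenever x₁(t) = 1 and x₂(t) ≥ 1. -/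
/-! Once `x₁ = 1` and `1 ≤ x₂ ≤ 1 + 30α`, the projection in the first coordinate is active and
the one in the second is not, so `x₂` follows the affine map `x ↦ 1/3 + (2/3 + 6α) x`, whose
fixed point is `1/(1 − 18α)` and whose slope `(2 + 18α)/3` lies in `[0, 1)`. The region is
invariant, so `x₂` converges geometrically. -/

open Filter Topology

theorem tendsto_of_sub_eq_mul_sub {u : ℕ → ℝ} {c r : ℝ} (hr : |r| < 1)
    (hu : ∀ n, u (n + 1) - c = r * (u n - c)) : Tendsto u atTop (𝓝 c) := by
  have hgeom : ∀ n, u n = r ^ n * (u 0 - c) + c := by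
    intro n
    induction n with
    | zero => ring
    | succ n ih => linear_combination hu n + r * ih
  have hlim := ((tendsto_pow_atTop_nhds_zero_of_abs_lt_one hr).mul_const (u 0 - c)).add_const c
  rw [zero_mul, zero_add] at hlim
  exact hlim.congr fun n => (hgeom n).symm

section Recursion

variable {α : ℝ} {x₁ x₂ : ℕ → ℝ} {t : ℕ}

theorem x₁_succ_eq_one
    (hrec1 : ∀ t, x₁ (t + 1) = max ((2 / 3 - 10 * α) * x₁ t + (1 / 3) * x₂ t) 1)
    (h1 : x₁ t = 1) (h2u : x₂ t ≤ 1 + 30 * α) : x₁ (t + 1) = 1 := by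
  rw [hrec1, h1]
  exact max_eq_right (by linarith)

theorem x₂_succ_eq (hα : 0 ≤ α)
    (hrec2 : ∀ t, x₂ (t + 1) = max ((1 / 3) * x₁ t + (2 / 3 + 6 * α) * x₂ t) 1)
    (h1 : x₁ t = 1) (h2l : 1 ≤ x₂ t) : x₂ (t + 1) = 1 / 3 + (2 / 3 + 6 * α) * x₂ t := by
  rw [hrec2, h1, mul_one]
  exact max_eq_left (by nlinarith)

theorem x₂_succ_sub_fixedPoint (hα : 0 ≤ α) (hα' : 1 - 18 * α ≠ 0)
    (hrec2 : ∀ t, x₂ (t + 1) = max ((1 / 3) * x₁ t + (2 / 3 + 6 * α) * x₂ t) 1)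
    (h1 : x₁ t = 1) (h2l : 1 ≤ x₂ t) :
    x₂ (t + 1) - 1 / (1 - 18 * α) = (2 + 18 * α) / 3 * (x₂ t - 1 / (1 - 18 * α)) := by
  rw [x₂_succ_eq hα hrec2 h1 h2l]
  linear_combination (-1 / 3 : ℝ) * mul_one_div_cancel hα'

theorem trapped_succ (hα0 : 0 ≤ α) (hα1 : α ≤ 1 / 45)
    (hrec1 : ∀ t, x₁ (t + 1) = max ((2 / 3 - 10 * α) * x₁ t + (1 / 3) * x₂ t) 1)
    (hrec2 : ∀ t, x₂ (t + 1) = max ((1 / 3) * x₁ t + (2 / 3 + 6 * α) * x₂ t) 1)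
    (h1 : x₁ t = 1) (h2l : 1 ≤ x₂ t) (h2u : x₂ t ≤ 1 + 30 * α) :
    x₁ (t + 1) = 1 ∧ 1 ≤ x₂ (t + 1) ∧ x₂ (t + 1) ≤ 1 + 30 * α := by
  have hx₂ := x₂_succ_eq hα0 hrec2 h1 h2l
  refine ⟨x₁_succ_eq_one hrec1 h1 h2u, by rw [hx₂]; nlinarith, ?_⟩
  -- `(2/3 + 6α)(1 + 30α) + 1/3 = 1 + 26α + 180α² ≤ 1 + 30α` iff `α ≤ 1/45`
  rw [hx₂]
  nlinarith

theorem trapped_of_le (hα0 : 0 ≤ α) (hα1 : α ≤ 1 / 45)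
    (hrec1 : ∀ t, x₁ (t + 1) = max ((2 / 3 - 10 * α) * x₁ t + (1 / 3) * x₂ t) 1)
    (hrec2 : ∀ t, x₂ (t + 1) = max ((1 / 3) * x₁ t + (2 / 3 + 6 * α) * x₂ t) 1)
    {t₀ : ℕ} (h1 : x₁ t₀ = 1) (h2l : 1 ≤ x₂ t₀) (h2u : x₂ t₀ ≤ 1 + 30 * α) :
    ∀ t, t₀ ≤ t → x₁ t = 1 ∧ 1 ≤ x₂ t ∧ x₂ t ≤ 1 + 30 * α := by
  intro t ht
  induction t, ht using Nat.le_induction with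
  | base => exact ⟨h1, h2l, h2u⟩
  | succ t _ ih => exact trapped_succ hα0 hα1 hrec1 hrec2 ih.1 ih.2.1 ih.2.2

end Recursion

/-- Convergence of the one-dimensional projected decentralized gradient descent example:
once `x₁` is trapped at `1` with `x₂` in `[1, 1 + 30α]`, it stays there, `x₂` converges to
`1/(1 − 18α)`, and the exact linear recursion holds for `x₂`. -/
theorem one_dim_example (α : ℝ) (hα0 : 0 < α) (hα1 : α < 1 / 45)
    (x₁ x₂ : ℕ → ℝ)
    (hrec1 : ∀ t, x₁ (t + 1) = max ((2 / 3 - 10 * α) * x₁ t + (1 / 3) * x₂ t) 1)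
    (hrec2 : ∀ t, x₂ (t + 1) = max ((1 / 3) * x₁ t + (2 / 3 + 6 * α) * x₂ t) 1)
    (t₀ : ℕ) (h1 : x₁ (t₀ + 1) = 1) (h2l : 1 ≤ x₂ (t₀ + 1)) (h2u : x₂ (t₀ + 1) ≤ 1 + 30 * α) :
    (∀ t, t₀ + 1 ≤ t → x₁ t = 1 ∧ 1 ≤ x₂ t ∧ x₂ t ≤ 1 + 30 * α) ∧
    Filter.Tendsto x₂ Filter.atTop (nhds (1 / (1 - 18 * α))) ∧
    (∀ t, x₁ t = 1 → 1 ≤ x₂ t →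
      x₂ (t + 1) - 1 / (1 - 18 * α) = (2 + 18 * α) / 3 * (x₂ t - 1 / (1 - 18 * α))) := by
  have hα0' : 0 ≤ α := hα0.le
  have hfix : 1 - 18 * α ≠ 0 := by linarith
  have hslope : |(2 + 18 * α) / 3| < 1 := abs_lt.mpr ⟨by linarith, by linarith⟩
  have trapped := trapped_of_le hα0' hα1.le hrec1 hrec2 h1 h2l h2u
  have recursion := fun t => x₂_succ_sub_fixedPoint (t := t) hα0' hfix hrec2
  refine ⟨trapped, ?_, recursion⟩
  rw [← tendsto_add_atTop_iff_nat (t₀ + 1)]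
  refine tendsto_of_sub_eq_mul_sub hslope fun n => ?_
  obtain ⟨h1n, h2n, -⟩ := trapped (n + (t₀ + 1)) (Nat.le_add_left _ _)
  rw [Nat.add_right_comm]
  exact recursion _ h1n h2n
end

section
/- Let μ, v > 0, w ≥ 1 and suppose C₁ := μv/2 > 1, and let Q, G > 0. Suppose B : ℕ → ℝ≥0 satisfies B(t+1) ≤ (1 − C₁/(t+w)) B(t) + G v²/(t+w)² for all t ≥ 0, with C₁/w < 1. Then there is a constant K (depending only on C₁, w, G, v) such that B(t) ≤ (w/(t+w))^{C₁} B(0) + K/(t+w−1) for all t ≥ 1; one can take K = (1/(C₁−1)) ((w+1)/w)^{C₁} ((w+1)/w)² G v². -/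
/-!
One proves by induction the stronger bound `B t ≤ (w/(t+w))^C B 0 + K/(t+w)` with
`C = μv/2`, `K = G v²/(C - 1)`, for all `t`. By Bernoulli's inequality `1 - C/x ≤ (x/(x+1))^C`, so the
contraction carries `(w/x)^C` to `(w/(x+1))^C`; and `K/x` reproduces itself because
`(1 - C/x) K/x + K (C-1)/x² = K (x-1)/x² ≤ K/(x+1)`. The stated constant only enlarges `K`
and the denominator `t + w - 1` only enlarges `K/(t+w)`.
-/

namespace RecursiveDecay

lemma one_sub_div_le_div_add_one_rpow {C x : ℝ} (hC : 1 ≤ C) (hx : 0 < x) :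
    1 - C / x ≤ (x / (x + 1)) ^ C := by
  have hs : (-1 : ℝ) ≤ -(1 / (x + 1)) := by
    rw [neg_le_neg_iff, div_le_one (by linarith)]
    linarith
  have hbern := one_add_mul_self_le_rpow_one_add hs hC
  have hbase : (1 : ℝ) + -(1 / (x + 1)) = x / (x + 1) := by field_simp; ring
  have hshift : C / (x + 1) ≤ C / x := div_le_div_of_nonneg_left (by linarith) hx (by linarith)
  rw [hbase, mul_neg, mul_one_div] at hbern
  linarith

lemma one_sub_div_mul_div_rpow_le {C w x : ℝ} (hC : 1 ≤ C) (hw : 0 ≤ w) (hx : 0 < x) :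
    (1 - C / x) * (w / x) ^ C ≤ (w / (x + 1)) ^ C := by
  have hsplit : (w / (x + 1)) ^ C = (x / (x + 1)) ^ C * (w / x) ^ C := by
    rw [← Real.mul_rpow (by positivity) (by positivity)]
    congr 1
    field_simp
  rw [hsplit]
  exact mul_le_mul_of_nonneg_right (one_sub_div_le_div_add_one_rpow hC hx) (by positivity)

lemma one_sub_div_mul_div_add_le {C K x : ℝ} (hK : 0 ≤ K) (hx : 0 < x) :
    (1 - C / x) * (K / x) + K * (C - 1) / x ^ 2 ≤ K / (x + 1) := by
  have hcollapse : (1 - C / x) * (K / x) + K * (C - 1) / x ^ 2 = K * (x - 1) / x ^ 2 := by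
    field_simp
    ring
  rw [hcollapse, div_le_div_iff₀ (by positivity) (by positivity)]
  nlinarith

theorem le_rpow_mul_add_div_of_recursion {B : ℕ → ℝ} {C w D : ℝ} (hC : 1 < C) (hCw : C ≤ w)
    (hD : 0 ≤ D) (hB₀ : 0 ≤ B 0)
    (hrec : ∀ t : ℕ, B (t + 1) ≤ (1 - C / (t + w)) * B t + D / (t + w) ^ 2) (t : ℕ) :
    B t ≤ (w / (t + w)) ^ C * B 0 + D / (C - 1) / (t + w) := by
  set K := D / (C - 1)
  have hK : 0 ≤ K := div_nonneg hD (by linarith)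
  have hDK : D = K * (C - 1) := (div_mul_cancel₀ D (by linarith)).symm
  induction t with
  | zero =>
    have hw : 0 < w := by linarith
    simp only [Nat.cast_zero, zero_add, div_self hw.ne', Real.one_rpow, one_mul]
    linarith [div_nonneg hK hw.le]
  | succ n ih =>
    set x : ℝ := n + w
    have hwx : w ≤ x := le_add_of_nonneg_left n.cast_nonneg
    have hx : 0 < x := by linarith
    have hcontr : 0 ≤ 1 - C / x := sub_nonneg.2 ((div_le_one hx).2 (by linarith))
    have hcast : ((n + 1 : ℕ) : ℝ) + w = x + 1 := by push_cast; ring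
    rw [hcast]
    calc B (n + 1) ≤ (1 - C / x) * B n + D / x ^ 2 := hrec n
      _ ≤ (1 - C / x) * ((w / x) ^ C * B 0 + K / x) + D / x ^ 2 := by gcongr
      _ = (1 - C / x) * (w / x) ^ C * B 0 + ((1 - C / x) * (K / x) + K * (C - 1) / x ^ 2) := by
        rw [hDK]; ring
      _ ≤ (w / (x + 1)) ^ C * B 0 + K / (x + 1) := by
        gcongr
        · exact one_sub_div_mul_div_rpow_le hC.le (by linarith) hx
        · exact one_sub_div_mul_div_add_le hK hx

end RecursiveDecay

open RecursiveDecay in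
theorem recursive_decay_general (μ v w G : ℝ) (hw : 1 ≤ w)
    (hC₁ : 1 < μ * v / 2) (hG : 0 < G)
    (B : ℕ → ℝ) (hBnonneg : ∀ t, 0 ≤ B t)
    (hrec : ∀ t : ℕ, B (t + 1) ≤ (1 - (μ * v / 2) / (t + w)) * B t + G * v ^ 2 / (t + w) ^ 2)
    (hstep : μ * v / 2 / w < 1) :
    ∀ t : ℕ, 1 ≤ t →
      B t ≤ (w / (t + w)) ^ (μ * v / 2) * B 0
        + (1 / (μ * v / 2 - 1)) * ((w + 1) / w) ^ (μ * v / 2) * ((w + 1) / w) ^ 2 * G * v ^ 2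
            / (t + w - 1) := by
  intro t ht
  set C := μ * v / 2
  have hw₀ : 0 < w := by linarith
  have hCw : C < w := (div_lt_one hw₀).1 hstep
  have hD : 0 ≤ G * v ^ 2 := by positivity
  have ht₁ : (1 : ℝ) ≤ t := by exact_mod_cast ht
  have hratio : 1 ≤ (w + 1) / w := by rw [le_div_iff₀ hw₀]; linarith
  have hK : G * v ^ 2 / (C - 1) ≤ 1 / (C - 1) * ((w + 1) / w) ^ C * ((w + 1) / w) ^ 2 * G * v ^ 2 := by
    have hinv : 0 ≤ 1 / (C - 1) := by rw [one_div_nonneg]; linarith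
    calc G * v ^ 2 / (C - 1) = 1 / (C - 1) * 1 * 1 * G * v ^ 2 := by ring
      _ ≤ _ := by
        gcongr
        exacts [Real.one_le_rpow hratio (by linarith), one_le_pow₀ hratio]
  calc B t ≤ (w / (t + w)) ^ C * B 0 + G * v ^ 2 / (C - 1) / (t + w) :=
        le_rpow_mul_add_div_of_recursion hC₁ hCw.le hD (hBnonneg 0) hrec t
    _ ≤ _ := by
        have hK₀ : 0 ≤ G * v ^ 2 / (C - 1) := div_nonneg hD (by linarith)
        have hden : (0 : ℝ) < t + w - 1 := by linarith
        exact add_le_add_right (div_le_div₀ (hK₀.trans hK) hK hden (by linarith)) _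

/-- `O(1/t)` decay for a sequence with contraction factor `1 − C₁/(t+w)`, `C₁ > 1`, and
perturbation of order `(t+w)⁻²`. -/
theorem recursive_decay (μ v w Q G : ℝ) (hμ : 0 < μ) (hv : 0 < v) (hw : 1 ≤ w)
    (hC₁ : 1 < μ * v / 2) (hQ : 0 < Q) (hG : 0 < G)
    (B : ℕ → ℝ) (hBnonneg : ∀ t, 0 ≤ B t)
    (hrec : ∀ t : ℕ, B (t + 1) ≤ (1 - (μ * v / 2) / (t + w)) * B t + G * v ^ 2 / (t + w) ^ 2)
    (hstep : μ * v / 2 / w < 1) :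
    ∀ t : ℕ, 1 ≤ t →
      B t ≤ (w / (t + w)) ^ (μ * v / 2) * B 0
        + (1 / (μ * v / 2 - 1)) * ((w + 1) / w) ^ (μ * v / 2) * ((w + 1) / w) ^ 2 * G * v ^ 2
            / (t + w - 1) :=
  recursive_decay_general μ v w G hw hC₁ hG B hBnonneg hrec hstep
end
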